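/- Gödel's Second Incompleteness Theorem follows from the Friedman–Pudlák lower bound: if T ⊇ S¹₂ is finite and consistent and T proved ∀y Con_T(y), then each instance Con_T(m̄) would have a T-proof of size O(log m) by substitution of the numeral m̄, contradicting the m^ε lower bound for sufficiently large m; hence T ⊬ ∀y Con_T(y). -/

import Mathlib

/-!
Common framework: first-order arithmetic (in Buss's language, i.e. with `⌊x/2⌋`, `|x|`
and the smash function `#` in addition to `0, S, +, *, ≤`), a Hilbert-style proof
calculus with proofs represented as explicit lists of formulas (so that proofs have
lengths), truth in the standard model ℕ, Robinson arithmetic `Q`, `IΣ₁`, a version of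
Buss's `S¹₂`, Gödel numbering, binary numerals, and a string-based framework for
polynomial-time computation (via Mathlib's TM2 machines), the classes P and NP,
and propositional proof systems in the sense of Cook–Reckhow.
-/

namespace NPPaper

/-! ### Syntax -/

/-- Terms of arithmetic, in de Bruijn representation, over the language
`0, S, +, *` together with Buss's `⌊x/2⌋`, `|x|` (binary length) and `#` (smash). -/
inductive Term : Type
  | var   : ℕ → Term
  | zero  : Term
  | succ  : Term → Term
  | add   : Term → Term → Term
  | mul   : Term → Term → Term
  | half  : Term → Term
  | len   : Term → Term
  | smash : Term → Term → Term
  deriving DecidableEq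

/-- Formulas of arithmetic (de Bruijn variables, primitive connectives `=`, `≤`, `¬`, `→`, `∀`). -/
inductive Formula : Type
  | eq  : Term → Term → Formula
  | le  : Term → Term → Formula
  | not : Formula → Formula
  | imp : Formula → Formula → Formula
  | all : Formula → Formula
  deriving DecidableEq

namespace Term

/-- Shift all variables `≥ d` up by one. -/
def lift (d : ℕ) : Term → Term
  | var n => if n < d then var n else var (n + 1)
  | zero => zero
  | succ t => succ (t.lift d)
  | add t s => add (t.lift d) (s.lift d)
  | mul t s => mul (t.lift d) (s.lift d)
  | half t => half (t.lift d)
  | len t => len (t.lift d)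
  | smash t s => smash (t.lift d) (s.lift d)

/-- Substitute the term `s` for variable `k` (variables above `k` are shifted down). -/
def subst (k : ℕ) (s : Term) : Term → Term
  | var n => if n < k then var n else if n = k then s else var (n - 1)
  | zero => zero
  | succ t => succ (subst k s t)
  | add t u => add (subst k s t) (subst k s u)
  | mul t u => mul (subst k s t) (subst k s u)
  | half t => half (subst k s t)
  | len t => len (subst k s t)
  | smash t u => smash (subst k s t) (subst k s u)

/-- Number of symbols of a term (a variable `xₙ` counts as `n+1` symbols). -/
def size : Term → ℕ
  | var n => n + 1
  | zero => 1
  | succ t => t.size + 1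
  | add t s => t.size + s.size + 1
  | mul t s => t.size + s.size + 1
  | half t => t.size + 1
  | len t => t.size + 1
  | smash t s => t.size + s.size + 1

/-- All variables of the term are `< k`. -/
def VarsBelow (k : ℕ) : Term → Prop
  | var n => n < k
  | zero => True
  | succ t => t.VarsBelow k
  | add t s => t.VarsBelow k ∧ s.VarsBelow k
  | mul t s => t.VarsBelow k ∧ s.VarsBelow k
  | half t => t.VarsBelow k
  | len t => t.VarsBelow k
  | smash t s => t.VarsBelow k ∧ s.VarsBelow k

/-- Value of a term in the standard model ℕ under an assignment. -/
def eval (ρ : ℕ → ℕ) : Term → ℕ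
  | var n => ρ n
  | zero => 0
  | succ t => t.eval ρ + 1
  | add t s => t.eval ρ + s.eval ρ
  | mul t s => t.eval ρ * s.eval ρ
  | half t => t.eval ρ / 2
  | len t => Nat.size (t.eval ρ)
  | smash t s => 2 ^ (Nat.size (t.eval ρ) * Nat.size (s.eval ρ))

/-- A Gödel code of a term. -/
def code : Term → ℕ
  | var n => Nat.pair 0 n
  | zero => Nat.pair 1 0
  | succ t => Nat.pair 2 t.code
  | add t s => Nat.pair 3 (Nat.pair t.code s.code)
  | mul t s => Nat.pair 4 (Nat.pair t.code s.code)
  | half t => Nat.pair 5 t.code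
  | len t => Nat.pair 6 t.code
  | smash t s => Nat.pair 7 (Nat.pair t.code s.code)

end Term

/-- Self-delimiting binary string encoding of a natural number (unary). -/
def encodeNat (n : ℕ) : List Bool := List.replicate n true ++ [false]

namespace Term

/-- A binary-string encoding of terms (prefix-free, hence injective). -/
def enc : Term → List Bool
  | var n => false :: false :: false :: encodeNat n
  | zero => false :: false :: true :: []
  | succ t => false :: true :: false :: t.enc
  | add t s => false :: true :: true :: (t.enc ++ s.enc)
  | mul t s => true :: false :: false :: (t.enc ++ s.enc)
  | half t => true :: false :: true :: t.enc
  | len t => true :: true :: false :: t.enc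
  | smash t s => true :: true :: true :: (t.enc ++ s.enc)

end Term

namespace Formula

/-- Shift all free variables `≥ d` up by one. -/
def lift (d : ℕ) : Formula → Formula
  | eq t s => eq (t.lift d) (s.lift d)
  | le t s => le (t.lift d) (s.lift d)
  | not φ => not (φ.lift d)
  | imp φ ψ => imp (φ.lift d) (ψ.lift d)
  | all φ => all (φ.lift (d + 1))

/-- Substitute the term `s` for free variable `k`. -/
def subst (k : ℕ) (s : Term) : Formula → Formula
  | eq t u => eq (Term.subst k s t) (Term.subst k s u)
  | le t u => le (Term.subst k s t) (Term.subst k s u)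
  | not φ => not (φ.subst k s)
  | imp φ ψ => imp (φ.subst k s) (ψ.subst k s)
  | all φ => all (φ.subst (k + 1) (s.lift 0))

/-- Number of symbols of a formula. -/
def size : Formula → ℕ
  | eq t s => t.size + s.size + 1
  | le t s => t.size + s.size + 1
  | not φ => φ.size + 1
  | imp φ ψ => φ.size + ψ.size + 1
  | all φ => φ.size + 1

/-- All free variables of the formula are `< k`. -/
def FreeBelow : ℕ → Formula → Prop
  | k, eq t s => t.VarsBelow k ∧ s.VarsBelow k
  | k, le t s => t.VarsBelow k ∧ s.VarsBelow k
  | k, not φ => φ.FreeBelow k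
  | k, imp φ ψ => φ.FreeBelow k ∧ ψ.FreeBelow k
  | k, all φ => φ.FreeBelow (k + 1)

/-- A sentence is a formula with no free variables. -/
def IsSentence (φ : Formula) : Prop := φ.FreeBelow 0

/-- Gödel code of a formula. -/
def code : Formula → ℕ
  | eq t s => Nat.pair 0 (Nat.pair t.code s.code)
  | le t s => Nat.pair 1 (Nat.pair t.code s.code)
  | not φ => Nat.pair 2 φ.code
  | imp φ ψ => Nat.pair 3 (Nat.pair φ.code ψ.code)
  | all φ => Nat.pair 4 φ.code

/-- Binary-string encoding of a formula (prefix-free, hence injective). -/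
def enc : Formula → List Bool
  | eq t s => false :: false :: false :: (t.enc ++ s.enc)
  | le t s => false :: false :: true :: (t.enc ++ s.enc)
  | not φ => false :: true :: false :: φ.enc
  | imp φ ψ => false :: true :: true :: (φ.enc ++ ψ.enc)
  | all φ => true :: false :: false :: φ.enc

/-- Conjunction, defined from the primitives. -/
def and (φ ψ : Formula) : Formula := (φ.imp ψ.not).not

/-- Disjunction. -/
def or (φ ψ : Formula) : Formula := φ.not.imp ψ

/-- Biconditional. -/
def iff (φ ψ : Formula) : Formula := (φ.imp ψ).and (ψ.imp φ)

/-- Existential quantifier. -/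
def ex (φ : Formula) : Formula := (Formula.all φ.not).not

/-- `φ.replace0 t` replaces the free variable `0` of `φ` by `t`,
leaving all other free variables untouched. -/
def replace0 (φ : Formula) (t : Term) : Formula := (φ.lift 1).subst 0 t

end Formula

/-- Environment update: `consEnv n ρ` sends de Bruijn variable `0` to `n`
and variable `i+1` to `ρ i`. -/
def consEnv (n : ℕ) (ρ : ℕ → ℕ) : ℕ → ℕ
  | 0 => n
  | i + 1 => ρ i

namespace Formula

/-- Satisfaction of a formula in the standard model ℕ under an assignment. -/
def Holds (ρ : ℕ → ℕ) : Formula → Prop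
  | eq t s => t.eval ρ = s.eval ρ
  | le t s => t.eval ρ ≤ s.eval ρ
  | not φ => ¬ φ.Holds ρ
  | imp φ ψ => φ.Holds ρ → ψ.Holds ρ
  | all φ => ∀ n : ℕ, φ.Holds (consEnv n ρ)

end Formula

/-- Truth in the standard model ℕ (for sentences; open formulas are taken universally). -/
def TrueInN (φ : Formula) : Prop := ∀ ρ : ℕ → ℕ, φ.Holds ρ

/-! ### The proof calculus -/

/-- The logical axioms of a standard Hilbert-style calculus for first-order logic
with equality. -/
inductive LogicalAxiom : Formula → Prop
  | ax1 (φ ψ : Formula) : LogicalAxiom (φ.imp (ψ.imp φ))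
  | ax2 (φ ψ χ : Formula) :
      LogicalAxiom ((φ.imp (ψ.imp χ)).imp ((φ.imp ψ).imp (φ.imp χ)))
  | ax3 (φ ψ : Formula) : LogicalAxiom ((φ.not.imp ψ.not).imp (ψ.imp φ))
  | allElim (φ : Formula) (t : Term) : LogicalAxiom ((Formula.all φ).imp (φ.subst 0 t))
  | allImp (φ ψ : Formula) :
      LogicalAxiom ((Formula.all (φ.imp ψ)).imp ((Formula.all φ).imp (Formula.all ψ)))
  | allVac (φ : Formula) : LogicalAxiom (φ.imp (Formula.all (φ.lift 0)))
  | eqRefl (t : Term) : LogicalAxiom (Formula.eq t t)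
  | eqSubst (t s : Term) (φ : Formula) :
      LogicalAxiom ((Formula.eq t s).imp ((φ.subst 0 t).imp (φ.subst 0 s)))

/-- `IsProofLine T π i φ` : the `i`-th line `φ` of the proof `π` is justified, i.e. it is a
logical axiom, a member of the axiom set `T`, or follows from earlier lines by
modus ponens or generalization. -/
def IsProofLine (T : Set Formula) (π : List Formula) (i : ℕ) (φ : Formula) : Prop :=
  LogicalAxiom φ ∨ φ ∈ T ∨
    (∃ j k ψ, j < i ∧ k < i ∧ π[k]? = some ψ ∧ π[j]? = some (ψ.imp φ)) ∨
    (∃ j ψ, j < i ∧ π[j]? = some ψ ∧ φ = Formula.all ψ)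

/-- Gödel's proof-checking relation `Prf_T(π, φ)`: `π` is a valid `T`-derivation
(a list of formulas, each of which is an axiom or follows from earlier lines by a rule)
whose last formula is `φ`. -/
def IsProof (T : Set Formula) (π : List Formula) (φ : Formula) : Prop :=
  π ≠ [] ∧ π.getLast? = some φ ∧ ∀ i φi, π[i]? = some φi → IsProofLine T π i φi

/-- Provability: `Pr_T(φ) = ∃ π, Prf_T(π, φ)`. -/
def Proves (T : Set Formula) (φ : Formula) : Prop := ∃ π, IsProof T π φ

/-- The length of a proof, i.e. the total number of symbols on its lines. -/
def proofLength (π : List Formula) : ℕ := (π.map Formula.size).sum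

/-- `T ⊢_s φ` : there is a `T`-proof of `φ` of length at most `s`. -/
def ProvesLen (T : Set Formula) (s : ℕ) (φ : Formula) : Prop :=
  ∃ π, IsProof T π φ ∧ proofLength π ≤ s

/-- Consistency of a theory. -/
def Consistent (T : Set Formula) : Prop := ¬ ∃ φ, Proves T φ ∧ Proves T φ.not

/-- A numeric code for a proof (a list of formulas). -/
def proofCodeN (π : List Formula) : ℕ := Encodable.encode (π.map Formula.code)

/-- A theory is recursively axiomatizable iff the set of Gödel codes of its axioms
is computable. -/
def RecursivelyAxiomatizable (T : Set Formula) : Prop :=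
  ComputablePred (fun n : ℕ => ∃ φ ∈ T, Formula.code φ = n)

/-! ### Numerals -/

/-- The term `2`. -/
def two : Term := Term.succ (Term.succ Term.zero)

/-- Efficient (binary) numerals: `gnum n` is a closed term of value `n`
and size `O(log n)`. -/
def gnum : ℕ → Term
  | 0 => Term.zero
  | (n + 1) =>
    if (n + 1) % 2 = 0 then Term.mul two (gnum ((n + 1) / 2))
    else Term.succ (Term.mul two (gnum ((n + 1) / 2)))
decreasing_by all_goals (simp_wf; omega)

/-- The Gödel numeral `⌜φ⌝` of a formula. -/
def godelNum (φ : Formula) : Term := gnum φ.code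

/-- The false sentence `0 ≠ 0`. -/
def falseSent : Formula := (Formula.eq Term.zero Term.zero).not

/-! ### Robinson arithmetic, `IΣ₁`, and `S¹₂` -/

open Term Formula in
/-- The axioms of Robinson arithmetic `Q` (with the defining axiom of `≤`). -/
def QTheory : Set Formula :=
  { Formula.all ((eq (succ (var 0)) zero).not),
    Formula.all (Formula.all ((eq (succ (var 1)) (succ (var 0))).imp (eq (var 1) (var 0)))),
    Formula.all (((eq (var 0) zero).not).imp (Formula.ex (eq (var 1) (succ (var 0))))),
    Formula.all (eq (add (var 0) zero) (var 0)),
    Formula.all (Formula.all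
      (eq (add (var 1) (succ (var 0))) (succ (add (var 1) (var 0))))),
    Formula.all (eq (mul (var 0) zero) zero),
    Formula.all (Formula.all
      (eq (mul (var 1) (succ (var 0))) (add (mul (var 1) (var 0)) (var 1)))),
    Formula.all (Formula.all
      ((le (var 1) (var 0)).iff (Formula.ex (eq (add (var 0) (var 2)) (var 1))))) }

/-- Δ₀ (bounded) formulas: all quantifiers are bounded. -/
inductive Delta0 : Formula → Prop
  | eq (t s : Term) : Delta0 (Formula.eq t s)
  | le (t s : Term) : Delta0 (Formula.le t s)
  | not {φ : Formula} : Delta0 φ → Delta0 φ.not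
  | imp {φ ψ : Formula} : Delta0 φ → Delta0 ψ → Delta0 (φ.imp ψ)
  | ball (t : Term) {φ : Formula} :
      Delta0 φ → Delta0 (Formula.all ((Formula.le (Term.var 0) (t.lift 0)).imp φ))

/-- Σ₁ formulas: existential quantifiers in front of a bounded formula. -/
inductive Sigma1 : Formula → Prop
  | delta0 {φ : Formula} : Delta0 φ → Sigma1 φ
  | ex {φ : Formula} : Sigma1 φ → Sigma1 (Formula.ex φ)

/-- Σ₁-soundness: every provable Σ₁ sentence is true in ℕ. -/
def Sigma1Sound (T : Set Formula) : Prop :=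
  ∀ φ : Formula, Sigma1 φ → Proves T φ → TrueInN φ

/-- The induction axiom for `φ` (induction variable = de Bruijn variable 0,
further free variables act as parameters). -/
def indAx (φ : Formula) : Formula :=
  (φ.replace0 Term.zero).imp
    ((Formula.all (φ.imp (φ.replace0 (Term.succ (Term.var 0))))).imp (Formula.all φ))

/-- `IΣ₁` : Robinson arithmetic plus induction for Σ₁ formulas. -/
def ISigma1 : Set Formula :=
  QTheory ∪ {ψ | ∃ φ, Sigma1 φ ∧ ψ = indAx φ}

/-- Σᵇ₁ formulas (a streamlined version of Buss's class): built from (negated) atoms by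
`∧`, `∨`, sharply bounded universal quantification and bounded existential
quantification. -/
inductive SigmaB1 : Formula → Prop
  | eq (t s : Term) : SigmaB1 (Formula.eq t s)
  | le (t s : Term) : SigmaB1 (Formula.le t s)
  | neq (t s : Term) : SigmaB1 ((Formula.eq t s).not)
  | nle (t s : Term) : SigmaB1 ((Formula.le t s).not)
  | and {φ ψ : Formula} : SigmaB1 φ → SigmaB1 ψ → SigmaB1 (φ.and ψ)
  | or {φ ψ : Formula} : SigmaB1 φ → SigmaB1 ψ → SigmaB1 (φ.or ψ)
  | sball (t : Term) {φ : Formula} :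
      SigmaB1 φ →
        SigmaB1 (Formula.all ((Formula.le (Term.var 0) (Term.len (t.lift 0))).imp φ))
  | bex (t : Term) {φ : Formula} :
      SigmaB1 φ → SigmaB1 (Formula.ex ((Formula.le (Term.var 0) (t.lift 0)).and φ))

/-- The polynomial induction (PIND) axiom for `φ`. -/
def pindAx (φ : Formula) : Formula :=
  (φ.replace0 Term.zero).imp
    ((Formula.all ((φ.replace0 (Term.half (Term.var 0))).imp φ)).imp (Formula.all φ))

open Term Formula in
/-- Defining axioms for `⌊x/2⌋`, `|x|` and `#`. -/
def BussAxioms : Set Formula :=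
  { Formula.all (le (mul two (half (var 0))) (var 0)),
    Formula.all (le (var 0) (succ (mul two (half (var 0))))),
    Formula.eq (len zero) zero,
    Formula.all (((eq (var 0) zero).not).imp
      (eq (len (var 0)) (succ (len (half (var 0)))))),
    Formula.all (eq (smash (var 0) zero) (succ zero)),
    Formula.all (Formula.all (((eq (var 0) zero).not).imp
      (eq (smash (var 1) (var 0))
          (mul (smash (var 1) (half (var 0))) (smash (succ zero) (var 1)))))) }

/-- (A version of) Buss's theory `S¹₂`: the basic axioms together with polynomial
induction for Σᵇ₁ formulas. -/
def S12Theory : Set Formula :=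
  QTheory ∪ BussAxioms ∪ {ψ | ∃ φ, SigmaB1 φ ∧ ψ = pindAx φ}

/-! ### Arithmetized (bounded) provability -/

/-- `ArithmetizesPrf T pcode PrfF` : `PrfF` is an arithmetization of the proof-checking
relation `Prf_T` of `T`, with respect to the (length-faithful, injective) numeric
encoding `pcode` of proofs.  `PrfF` has free variables `0` (the code of the proof `p`)
and `1` (the code `f` of the proved formula), it is a bounded formula, and its truth
in ℕ defines exactly the relation `Prf_T`. -/
def ArithmetizesPrf (T : Set Formula) (pcode : List Formula → ℕ) (PrfF : Formula) : Prop :=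
  Function.Injective pcode ∧
  (∃ C : ℕ, 0 < C ∧ ∀ π : List Formula,
      Nat.size (pcode π) ≤ C * (proofLength π + 1) ∧
      proofLength π ≤ C * (Nat.size (pcode π) + 1)) ∧
  PrfF.FreeBelow 2 ∧ Delta0 PrfF ∧
  (∀ p f : ℕ,
    TrueInN ((PrfF.subst 1 (gnum f)).subst 0 (gnum p)) ↔
      ∃ π φ, p = pcode π ∧ f = Formula.code φ ∧ IsProof T π φ)

/-- The bounded provability predicate `Pr_T^x(f) = ∃p (|p| ≤ x ∧ Prf_T(p, f))`, as a
formula with free variables `0` (the formula code `f`) and `1` (the bound `x`),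
built from an arithmetized proof relation `PrfF`. -/
def PrBddF (PrfF : Formula) : Formula :=
  Formula.ex ((Formula.le (Term.len (Term.var 0)) (Term.var 2)).and PrfF)

/-- The bounded consistency statement `Con_T(x) = ¬Pr_T^x(⌜0 ≠ 0⌝)`, as a formula with
free variable `0` (the bound `x`). -/
def ConBddF (PrfF : Formula) : Formula :=
  ((PrBddF PrfF).subst 0 (gnum falseSent.code)).not

/-! ### Strings, polynomial time, P and NP -/

/-- The identity encoding of binary strings. -/
def listBoolEnc : Computability.Encoding (List Bool) Bool where
  encode := id
  decode := fun l => some l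
  decode_encode := fun _ => rfl

/-- A string function is polynomial-time computable iff some (two-stack) Turing machine
computes it in polynomial time. -/
def PolyTimeComputable (f : List Bool → List Bool) : Prop :=
  Nonempty (Turing.TM2ComputableInPolyTime listBoolEnc.encode listBoolEnc.encode f)

/-- The class P of polynomial-time decidable languages of binary strings. -/
def InP (L : Set (List Bool)) : Prop :=
  ∃ f : List Bool → List Bool,
    PolyTimeComputable f ∧ ∀ w, w ∈ L ↔ f w = [true]

/-- An (injective) pairing `w#y` of binary strings. -/
def pairStr (w y : List Bool) : List Bool :=
  (w.flatMap fun b => [b, b]) ++ [true, false] ++ y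

/-- A checking relation `R(w, y)` is polynomial-time iff the language
`L_R = {w#y | R(w, y)}` is in P. -/
def PolyTimeCheckingRel (R : List Bool → List Bool → Prop) : Prop :=
  InP {z | ∃ w y, z = pairStr w y ∧ R w y}

/-- The class NP: `L ∈ NP` iff there are `k ∈ ℕ` and a polynomial-time checking
relation `R` such that for all strings `w`,
`w ∈ L ↔ ∃ y (|y| ≤ |w|^k ∧ R(w, y))`. -/
def InNP (L : Set (List Bool)) : Prop :=
  ∃ (k : ℕ) (R : List Bool → List Bool → Prop),
    PolyTimeCheckingRel R ∧
    ∀ w, w ∈ L ↔ ∃ y, y.length ≤ w.length ^ k ∧ R w y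

/-- The class coNP. -/
def InCoNP (L : Set (List Bool)) : Prop := InNP Lᶜ

/-- String encoding of a proof (a list of formulas). -/
def proofEnc (π : List Formula) : List Bool := (π.map Formula.enc).flatten

/-- The proof-checking relation `Prf_T`, as a checking relation on binary strings:
`R(w, y)` holds iff `w` encodes a formula `φ`, `y` encodes a derivation `π`, and
`Prf_T(π, φ)`. -/
def PrfRel (T : Set Formula) (w y : List Bool) : Prop :=
  ∃ φ π, w = Formula.enc φ ∧ y = proofEnc π ∧ IsProof T π φ

/-- The language `L_k = {φ | ∃π (|π| ≤ |φ|^k ∧ Prf_T(π,φ))}`, as a set of binary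
strings. -/
def LkStr (T : Set Formula) (k : ℕ) : Set (List Bool) :=
  {w | ∃ y, y.length ≤ w.length ^ k ∧ PrfRel T w y}

/-- The set `L_k = {φ | ∃π (|π| ≤ |φ|^k ∧ Prf_T(π,φ))}`, as a set of formulas. -/
def LkF (T : Set Formula) (k : ℕ) : Set Formula :=
  {φ | ∃ π, IsProof T π φ ∧ proofLength π ≤ φ.size ^ k}

/-- `DecidesInTime L b` : some Turing machine decides membership in `L`, running on
input `w` for at most `b w` steps. -/
def DecidesInTime (L : Set (List Bool)) (b : List Bool → ℕ) : Prop :=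
  ∃ (tm : Turing.FinTM2) (eIn : tm.Γ tm.k₀ ≃ Bool) (eOut : tm.Γ tm.k₁ ≃ Bool),
    ∀ w : List Bool, ∃ o : Bool, (o = true ↔ w ∈ L) ∧
      Nonempty (Turing.EvalsToInTime tm.step
        (Turing.initList tm (w.map eIn.symm))
        (some (Turing.haltList tm ([o].map eOut.symm))) (b w))

/-! ### Propositional logic and Cook–Reckhow proof systems -/

/-- Propositional formulas. -/
inductive PropForm : Type
  | var : ℕ → PropForm
  | fls : PropForm
  | imp : PropForm → PropForm → PropForm
  deriving DecidableEq

namespace PropForm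

/-- Evaluation of a propositional formula under a truth assignment. -/
def eval (v : ℕ → Bool) : PropForm → Bool
  | var n => v n
  | fls => false
  | imp φ ψ => !(φ.eval v) || ψ.eval v

/-- Size of a propositional formula. -/
def size : PropForm → ℕ
  | var n => n + 1
  | fls => 1
  | imp φ ψ => φ.size + ψ.size + 1

/-- The list of variables of a propositional formula. -/
def vars : PropForm → List ℕ
  | var n => [n]
  | fls => []
  | imp φ ψ => φ.vars ++ ψ.vars

/-- Binary-string encoding of a propositional formula (prefix-free, hence injective). -/
def enc : PropForm → List Bool
  | var n => false :: false :: encodeNat n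
  | fls => false :: true :: []
  | imp φ ψ => true :: true :: (φ.enc ++ ψ.enc)

/-- Negation. -/
def neg (φ : PropForm) : PropForm := φ.imp fls

/-- Conjunction. -/
def conj (φ ψ : PropForm) : PropForm := (φ.imp ψ.neg).neg

/-- Biconditional. -/
def biimp (φ ψ : PropForm) : PropForm := (φ.imp ψ).conj (ψ.imp φ)

end PropForm

/-- Tautologies. -/
def Taut (α : PropForm) : Prop := ∀ v : ℕ → Bool, α.eval v = true

/-- The language TAUT of (encodings of) propositional tautologies. -/
def TautLang : Set (List Bool) := {w | ∃ α, w = PropForm.enc α ∧ Taut α}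

/-- A propositional proof system in the sense of Cook and Reckhow: a polynomial-time
computable function from strings ("proofs") onto the set of (encoded) tautologies. -/
def PropProofSystem (f : List Bool → List Bool) : Prop :=
  PolyTimeComputable f ∧
  (∀ π : List Bool, f π ∈ TautLang) ∧
  (∀ α : PropForm, Taut α → ∃ π : List Bool, f π = PropForm.enc α)

/-- A proof system is p-bounded if every tautology has a proof of polynomially
bounded size. -/
def PBounded (f : List Bool → List Bool) : Prop :=
  ∃ c : ℕ, 1 ≤ c ∧ ∀ α : PropForm, Taut α →
    ∃ π : List Bool, f π = PropForm.enc α ∧ π.length ≤ ((PropForm.enc α).length + c) ^ c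

/-- `f` p-simulates `g` : proofs in `g` can be translated into proofs in `f` in
polynomial time. -/
def PSimulates (f g : List Bool → List Bool) : Prop :=
  ∃ h : List Bool → List Bool, PolyTimeComputable h ∧ ∀ π, f (h π) = g π

/-- The consistency statement `Con_T = ¬Pr_T(⌜0 ≠ 0⌝)`, for a given provability
predicate `PrT` (a formula with free variable `0`). -/
def ConF (PrT : Formula) : Formula := (PrT.subst 0 (godelNum falseSent)).not

/-- The `Π₁` consistency statement `∀p ¬Prf_T(p, ⌜0 ≠ 0⌝)`, for a given arithmetized
proof relation `PrfF` (free variables `0` = proof, `1` = formula). -/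
def ConSent (PrfF : Formula) : Formula :=
  Formula.all ((PrfF.subst 1 (godelNum falseSent)).not)

/-- The number (below `2 ^ n`) whose binary digits are given by the truth
assignment `v`. -/
def bitsToNat (n : ℕ) (v : ℕ → Bool) : ℕ :=
  ∑ i ∈ Finset.range n, if v i then 2 ^ i else 0

/-- Axiom schemes of a standard propositional Hilbert/Frege calculus. -/
inductive PropAxiom : PropForm → Prop
  | k (a b : PropForm) : PropAxiom (a.imp (b.imp a))
  | s (a b c : PropForm) :
      PropAxiom ((a.imp (b.imp c)).imp ((a.imp b).imp (a.imp c)))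
  | dne (a : PropForm) : PropAxiom (((a.imp .fls).imp .fls).imp a)

/-- An extended-Frege derivation (p-equivalent to extended resolution) of `α` from an
additional set `Ax` of propositional axioms: a list of lines, each of which is in `Ax`,
a propositional axiom, obtained by modus ponens from earlier lines, or an extension
axiom `v ↔ ψ` introducing a fresh variable `v`. -/
def IsEFDeriv (Ax : Set PropForm) (π : List PropForm) (α : PropForm) : Prop :=
  π.getLast? = some α ∧ ∀ (i : ℕ) (φi : PropForm), π[i]? = some φi →
    (φi ∈ Ax ∨ PropAxiom φi ∨
     (∃ (j : ℕ) (k : ℕ) (ψ : PropForm), j < i ∧ k < i ∧ π[k]? = some ψ ∧ π[j]? = some (ψ.imp φi)) ∨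
     (∃ v ψ, φi = (PropForm.var v).biimp ψ ∧ v ∉ ψ.vars ∧ v ∉ α.vars ∧
        ∀ j (φj : PropForm), j ≠ i → π[j]? = some φj → v ∉ φj.vars))

/-- A proof in the proof system `P_T` (extended resolution/Frege augmented with all
propositional translations `‖B‖ⁿ` of theorems `B` of `T` as additional axiom schemes):
a list of `T`-proofs of the theorems `B` used, together with an extended-Frege
derivation from the translations of those theorems.  (The accompanying `T`-proofs make
the system polynomial-time recognizable.) -/
def PTProof (T : Set Formula) (tr : Formula → ℕ → PropForm)
    (π : List (List Formula × Formula) × List PropForm) (α : PropForm) : Prop :=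
  (∀ q ∈ π.1, IsProof T q.1 q.2) ∧
  IsEFDeriv {γ | ∃ q ∈ π.1, ∃ n : ℕ, γ = tr q.2 n} π.2 α

/-- The length of a `P_T`-proof. -/
def PTlen (π : List (List Formula × Formula) × List PropForm) : ℕ :=
  (π.1.map fun q => proofLength q.1 + q.2.size).sum + (π.2.map PropForm.size).sum

/-- String encoding of one `(T-proof, theorem)` pair. -/
def encFProof (q : List Formula × Formula) : List Bool := pairStr (proofEnc q.1) q.2.enc

/-- String encoding of a `P_T`-proof. -/
def encPT (π : List (List Formula × Formula) × List PropForm) : List Bool :=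
  pairStr ((π.1.map encFProof).flatten) ((π.2.map PropForm.enc).flatten)

/-!
If `T` proved `∀y Con_T(y)` by a proof `π`, then one `∀`-elimination at the binary numeral
`m̄`, whose size is `O(log m)`, turns `π` into a proof of `Con_T(m̄)` of length
`|π| + O(log m)`. A function `A + B log m` is eventually below `m^ε`, so for large `m` this
contradicts the Friedman–Pudlák lower bound.
-/

namespace Term

lemma size_subst_le (t : Term) (k : ℕ) (s : Term) :
    (Term.subst k s t).size ≤ t.size * (s.size + 1) := by
  induction t with
  | var n => simp only [subst]; split_ifs <;> simp only [size] <;> nlinarith [n.sub_le 1]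
  | _ => simp only [subst, size]; nlinarith

lemma size_lift_le (d : ℕ) (t : Term) : (t.lift d).size ≤ 2 * t.size := by
  induction t with
  | var n => simp only [lift]; split_ifs <;> simp only [size] <;> omega
  | _ => simp only [lift, size]; omega

end Term

namespace Formula

lemma exists_size_subst_le (φ : Formula) :
    ∃ c : ℕ, ∀ (k : ℕ) (t : Term), (φ.subst k t).size ≤ c * (t.size + 1) := by
  induction φ with
  | eq a b | le a b =>
    refine ⟨a.size + b.size + 1, fun k t => ?_⟩
    have := a.size_subst_le k t
    have := b.size_subst_le k t
    simp only [subst, size]; nlinarith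
  | not φ ih =>
    obtain ⟨c, hc⟩ := ih
    exact ⟨c + 1, fun k t => by have := hc k t; simp only [subst, size]; nlinarith⟩
  | imp φ ψ ihφ ihψ =>
    obtain ⟨c, hc⟩ := ihφ
    obtain ⟨d, hd⟩ := ihψ
    exact ⟨c + d + 1, fun k t => by
      have := hc k t; have := hd k t; simp only [subst, size]; nlinarith⟩
  | all φ ih =>
    obtain ⟨c, hc⟩ := ih
    exact ⟨2 * c + 1, fun k t => by
      have := hc (k + 1) (t.lift 0); have := t.size_lift_le 0; simp only [subst, size]; nlinarith⟩

end Formula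

lemma _root_.Nat.size_div_two_lt {n : ℕ} (hn : n ≠ 0) : Nat.size (n / 2) < Nat.size n := by
  have hpos : 0 < Nat.size n := Nat.size_pos.2 (Nat.pos_of_ne_zero hn)
  have hlt : n < 2 * 2 ^ (Nat.size n - 1) := by
    rw [← pow_succ', Nat.sub_add_cancel hpos]; exact Nat.lt_size_self n
  have : Nat.size (n / 2) ≤ Nat.size n - 1 := Nat.size_le.2 (by omega)
  omega

lemma size_gnum_le (n : ℕ) : (gnum n).size ≤ 5 * Nat.size n + 1 := by
  induction n using gnum.induct with
  | case1 => simp [gnum, Term.size]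
  | case2 n _ ih | case3 n _ ih =>
    have := Nat.size_div_two_lt n.add_one_ne_zero
    rw [Nat.succ_eq_add_one, gnum]
    split <;> simp only [Term.size, two] <;> omega

section Proofs

variable {T : Set Formula} {π : List Formula} {φ ψ χ : Formula}

lemma IsProofLine.append {i : ℕ} (h : IsProofLine T π i φ) (hi : i ≤ π.length)
    (l : List Formula) : IsProofLine T (π ++ l) i φ := by
  have hget : ∀ j < i, (π ++ l)[j]? = π[j]? := fun _ hj => List.getElem?_append_left (by omega)
  rcases h with h | h | ⟨j, k, ψ, hj, hk, hgk, hgj⟩ | ⟨j, ψ, hj, hgj, rfl⟩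
  · exact Or.inl h
  · exact Or.inr (Or.inl h)
  · exact Or.inr (Or.inr (Or.inl ⟨j, k, ψ, hj, hk, (hget k hk).trans hgk, (hget j hj).trans hgj⟩))
  · exact Or.inr (Or.inr (Or.inr ⟨j, ψ, hj, (hget j hj).trans hgj, rfl⟩))

lemma IsProof.concat (hπ : IsProof T π ψ) (hφ : IsProofLine T (π ++ [φ]) π.length φ) :
    IsProof T (π ++ [φ]) φ := by
  refine ⟨by simp, List.getLast?_concat .., fun i φi hi => ?_⟩
  rcases lt_or_ge i π.length with h | h
  · rw [List.getElem?_append_left h] at hi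
    exact (hπ.2.2 i φi hi).append h.le _
  · obtain ⟨rfl, rfl⟩ : i = π.length ∧ φ = φi := by
      rw [List.getElem?_append_right h, List.getElem?_singleton] at hi
      split_ifs at hi
      · exact ⟨by omega, Option.some_injective _ hi⟩
    exact hφ

lemma IsProof.instantiate (h : IsProof T π (Formula.all χ)) (t : Term) :
    IsProof T (π ++ [(Formula.all χ).imp (χ.subst 0 t)] ++ [χ.subst 0 t]) (χ.subst 0 t) := by
  have hax := h.concat (Or.inl (LogicalAxiom.allElim χ t))
  refine hax.concat (Or.inr (Or.inr (Or.inl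
    ⟨π.length, π.length - 1, Formula.all χ, by simp, by simp, ?_, by simp⟩)))
  have hpos : 0 < π.length := List.length_pos_iff.2 h.1
  rw [List.append_assoc, List.getElem?_append_left (by omega), ← List.getLast?_eq_getElem?]
  exact h.2.1

lemma ProvesLen.mono {s s' : ℕ} (h : ProvesLen T s φ) (hs : s ≤ s') : ProvesLen T s' φ :=
  let ⟨π, hπ, hlen⟩ := h
  ⟨π, hπ, hlen.trans hs⟩

lemma IsProof.provesLen_subst (h : IsProof T π (Formula.all χ)) (t : Term) :
    ProvesLen T (proofLength π + χ.size + 2 + 2 * (χ.subst 0 t).size) (χ.subst 0 t) :=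
  ⟨_, h.instantiate t, by simp [proofLength, Formula.size]; omega⟩

lemma exists_provesLen_subst_gnum (h : Proves T (Formula.all χ)) :
    ∃ A B : ℕ, ∀ m : ℕ, ProvesLen T (A + B * Nat.size m) (χ.subst 0 (gnum m)) := by
  obtain ⟨π, hπ⟩ := h
  obtain ⟨c, hc⟩ := χ.exists_size_subst_le
  -- the instance `χ.subst 0 (gnum m)`, of size `≤ c * (5 * |m| + 2)`, occurs twice in the proof
  refine ⟨proofLength π + χ.size + 2 + 4 * c, 10 * c, fun m => (hπ.provesLen_subst _).mono ?_⟩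
  have := hc 0 (gnum m)
  have := size_gnum_le m
  nlinarith

end Proofs

open Filter Asymptotics in
lemma eventually_add_mul_le_pow (A B : ℝ) {r : ℝ} (hr : 1 < r) :
    ∀ᶠ k : ℕ in atTop, A + B * k ≤ r ^ k := by
  have hconst := (isLittleO_pow_const_const_pow_of_one_lt (R := ℝ) 0 hr).const_mul_left A
  have hlin := (isLittleO_pow_const_const_pow_of_one_lt (R := ℝ) 1 hr).const_mul_left B
  filter_upwards [(hconst.add hlin).def one_pos] with k hk
  rw [pow_zero, mul_one, pow_one, one_mul, Real.norm_eq_abs, Real.norm_eq_abs,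
    abs_of_pos (pow_pos (zero_lt_one.trans hr) k)] at hk
  exact (le_abs_self _).trans hk

lemma exists_add_mul_size_le_rpow (A B : ℝ) {ε : ℝ} (hε : 0 < ε) :
    ∃ m : ℕ, 1 ≤ m ∧ A + B * Nat.size m ≤ (m : ℝ) ^ ε := by
  obtain ⟨k, hk⟩ :=
    (eventually_add_mul_le_pow (A + B) B (Real.one_lt_rpow one_lt_two hε)).exists
  refine ⟨2 ^ k, Nat.one_le_two_pow, ?_⟩
  rw [Nat.size_pow, Nat.cast_pow, Nat.cast_ofNat, ← Real.rpow_pow_comm zero_le_two]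
  push_cast
  linarith

theorem second_incompleteness_from_friedman_pudlak_general
    (T : Set Formula) (PrfF : Formula)
    (hLB : ∃ ε : ℝ, 0 < ε ∧ ∀ m : ℕ, 1 ≤ m →
      ¬ ∃ π : List Formula, IsProof T π ((ConBddF PrfF).subst 0 (gnum m)) ∧
          (proofLength π : ℝ) ≤ (m : ℝ) ^ ε) :
    ¬ Proves T (Formula.all (ConBddF PrfF)) := by
  intro hProv
  obtain ⟨ε, hε, hLB⟩ := hLB
  obtain ⟨A, B, hshort⟩ := exists_provesLen_subst_gnum hProv
  obtain ⟨m, hm, hle⟩ := exists_add_mul_size_le_rpow A B hε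
  obtain ⟨π, hπ, hlen⟩ := hshort m
  exact hLB m hm ⟨π, hπ, le_trans (by exact_mod_cast hlen) hle⟩

/-- Gödel's Second Incompleteness Theorem follows from the
Friedman–Pudlák lower bound: if `T ⊇ S¹₂` is finite and consistent and the lower bound
holds (there is `ε > 0` such that no `T`-proof of `Con_T(m̄)` has length at most
`m^ε`), then `T ⊬ ∀y Con_T(y)` — for if `T` proved `∀y Con_T(y)`, each instance
`Con_T(m̄)` would have a `T`-proof of size `O(log m)` by substitution of the numeral
`m̄`, contradicting the `m^ε` lower bound for sufficiently large `m`. -/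
theorem second_incompleteness_from_friedman_pudlak
    (T : Set Formula) (hFin : T.Finite) (hCons : Consistent T)
    (hS12 : ∀ φ ∈ S12Theory, Proves T φ)
    (pcode : List Formula → ℕ) (PrfF : Formula)
    (hArith : ArithmetizesPrf T pcode PrfF)
    (hLB : ∃ ε : ℝ, 0 < ε ∧ ∀ m : ℕ, 1 ≤ m →
      ¬ ∃ π : List Formula, IsProof T π ((ConBddF PrfF).subst 0 (gnum m)) ∧
          (proofLength π : ℝ) ≤ (m : ℝ) ^ ε) :
    ¬ Proves T (Formula.all (ConBddF PrfF)) :=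
  second_incompleteness_from_friedman_pudlak_general T PrfF hLB

end NPPaper
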